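/- Let (P, W, c) be a witness Gabriel drawing of a complete k-partite graph with k ≥ 3, with P ∪ W in general position and with every color class of c containing at least two points. Fix a color i₀ ∈ Fin k ('black'). Let m ≥ 3 and let q : Fin m → P be injective with each q(j) lying on the convex hull of P, with q(0), …, q(m−1) in counterclockwise convex position, with at least one q(j) of color i₀, and with no two cyclically consecutive points q(j), q(j+1 mod m) both of color i₀. Then no point p ∈ P with c(p) = i₀ lies in the interior of convexHull{q(0), …, q(m−1)}. -/

import Mathlib

open scoped RealInnerProductSpace

noncomputable section

/-- The Euclidean plane. -/
abbrev Pt := EuclideanSpace ℝ (Fin 2)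

/-- The closed disk with diameter `ab`. -/
def diskD (a b : Pt) : Set Pt := Metric.closedBall (midpoint ℝ a b) (dist a b / 2)

/-- `a` and `b` are adjacent in the witness Gabriel graph with witness set `W`. -/
def gabrielEdge (W : Set Pt) (a b : Pt) : Prop := (diskD a b \ {a, b}) ∩ W = ∅

/-- General position: no three points collinear, no four points concyclic. -/
def GenPos (S : Set Pt) : Prop :=
  (∀ a ∈ S, ∀ b ∈ S, ∀ c ∈ S, a ≠ b → a ≠ c → b ≠ c → ¬ Collinear ℝ ({a, b, c} : Set Pt)) ∧
  (∀ a ∈ S, ∀ b ∈ S, ∀ c ∈ S, ∀ d ∈ S, a ≠ b → a ≠ c → a ≠ d → b ≠ c → b ≠ d → c ≠ d →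
    ¬ EuclideanGeometry.Cospherical ({a, b, c, d} : Set Pt))

/-- Planar determinant `u₁v₂ − u₂v₁`. -/
def det2 (u v : Pt) : ℝ := u 0 * v 1 - u 1 * v 0

/-- Counterclockwise convex position. -/
def CCWConvexPos {m : ℕ} (q : Fin m → Pt) : Prop :=
  ∀ i j k : Fin m, i < j → j < k → 0 < det2 (q j - q i) (q k - q i)

/-- Cyclic successor in `Fin m`. -/
def cyclicSucc {m : ℕ} (hm : 0 < m) (i : Fin m) : Fin m :=
  ⟨((i : ℕ) + 1) % m, Nat.mod_lt _ hm⟩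

open Set Fin.NatCast

/-!
Two black points `p` and `h` are not adjacent, so some witness `w ∉ {p, h}` lies in the disk with
diameter `ph`, i.e. `⟪p - w, h - w⟫ ≤ 0`. Every point `y ≠ w` adjacent to `h`, and `h` itself,
satisfies `⟪y - w, h - w⟫ > 0`; since `⟪· - w, h - w⟫` is affine, `p` cannot be a convex
combination of such points. Now fan the polygon out from a vertex `q a` that follows a black
vertex: since black vertices are never consecutive, each fan triangle `q a, q i, q (i + 1)` has
at most one black vertex, and a black interior point would lie in one of these triangles without
being one of its vertices.
-/

lemma det2_sub_sub_rotate (a b c : Pt) : det2 (b - a) (c - a) = det2 (c - b) (a - b) := by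
  simp only [det2, PiLp.sub_apply]; ring

lemma det2_sub_sub_swap (a b x : Pt) : det2 (a - b) (x - b) = -det2 (b - a) (x - a) := by
  simp only [det2, PiLp.sub_apply]; ring

lemma convex_setOf_det2_nonneg (u o : Pt) : Convex ℝ {x : Pt | 0 ≤ det2 u (x - o)} := by
  intro x hx y hy a b ha hb hab
  have hcombo : det2 u (a • x + b • y - o) = a * det2 u (x - o) + b * det2 u (y - o) := by
    simp only [det2, PiLp.sub_apply, PiLp.add_apply, PiLp.smul_apply, smul_eq_mul]
    linear_combination (u 0 * o 1 - u 1 * o 0) * hab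
  simp only [mem_ofPred_eq, hcombo] at *
  positivity

lemma mem_convexHull_triangle_of_det2_nonneg {a b c x : Pt} (habc : 0 < det2 (b - a) (c - a))
    (ha : 0 ≤ det2 (c - b) (x - b)) (hb : 0 ≤ det2 (a - c) (x - c))
    (hc : 0 ≤ det2 (b - a) (x - a)) : x ∈ convexHull ℝ {a, b, c} := by
  set D := det2 (b - a) (c - a)
  have hw : ∑ i, ![det2 (c - b) (x - b) / D, det2 (a - c) (x - c) / D, det2 (b - a) (x - a) / D] i
      = 1 := by
    simp only [Fin.sum_univ_three, Matrix.cons_val_zero, Matrix.cons_val_one, Matrix.cons_val_two,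
      Matrix.head_cons, Matrix.tail_cons]
    field_simp
    simp only [D, det2, PiLp.sub_apply]; ring
  have hx : ∑ i, ![det2 (c - b) (x - b) / D, det2 (a - c) (x - c) / D,
      det2 (b - a) (x - a) / D] i • ![a, b, c] i = x := by
    simp only [Fin.sum_univ_three, Matrix.cons_val_zero, Matrix.cons_val_one, Matrix.cons_val_two,
      Matrix.head_cons, Matrix.tail_cons]
    ext i
    simp only [PiLp.add_apply, PiLp.smul_apply, smul_eq_mul]
    field_simp
    fin_cases i <;> simp [D, det2] <;> ring
  rw [← hx]
  refine (convex_convexHull ℝ _).sum_mem (fun i _ => ?_) hw (fun i _ => ?_)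
  · fin_cases i <;> simp <;> positivity
  · exact subset_convexHull ℝ _ (by fin_cases i <;> simp)

lemma det2_eq_zero_of_mem_interior {C : Set Pt} {o u : Pt} (ho : o ∈ interior C)
    (hC : ∀ x ∈ C, 0 ≤ det2 u (x - o)) (v : Pt) : det2 u v = 0 := by
  have hmin : IsLocalMin (fun t : ℝ => t * det2 u v) 0 := by
    have hline : ∀ᶠ t in nhds (0 : ℝ), o + t • v ∈ C :=
      ((continuous_const.add (continuous_id.smul continuous_const)).tendsto' 0 o
        (by simp)).eventually (mem_interior_iff_mem_nhds.mp ho)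
    filter_upwards [hline] with t ht
    have := hC _ ht
    simp only [det2, add_sub_cancel_left, PiLp.smul_apply, smul_eq_mul] at this
    simp only [det2, zero_mul]; linarith
  simpa using hmin.deriv_eq_zero

lemma exists_nonneg_and_succ_nonpos (f : ℕ → ℝ) {a : ℕ} (ha : 0 ≤ f a) :
    ∀ n, f (a + n + 1) ≤ 0 → ∃ i, a ≤ i ∧ i ≤ a + n ∧ 0 ≤ f i ∧ f (i + 1) ≤ 0
  | 0, h => ⟨a, le_rfl, le_rfl, ha, h⟩
  | n + 1, h => by
    by_cases hn : f (a + n + 1) ≤ 0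
    · obtain ⟨i, hai, hin, hi⟩ := exists_nonneg_and_succ_nonpos f ha n hn
      exact ⟨i, hai, by omega, hi⟩
    · exact ⟨a + n + 1, by omega, by omega, (not_le.1 hn).le, h⟩

section Polygon

/- Vertex indices are natural numbers read modulo `m`, so for every `a` the vertices are the
`q i` with `a ≤ i < a + m`. -/
variable {m : ℕ} [NeZero m] {q : Fin m → Pt}

lemma cyclicSucc_natCast (hm : 0 < m) (i : ℕ) :
    cyclicSucc hm (i : Fin m) = ((i + 1 : ℕ) : Fin m) :=
  Fin.ext (by simp only [cyclicSucc, Fin.val_natCast, Nat.mod_add_mod])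

lemma Fin.exists_le_lt_add_natCast_eq (i : ℕ) (j : Fin m) :
    ∃ l, i ≤ l ∧ l < i + m ∧ (l : Fin m) = j :=
  ⟨i + (j - i : Fin m), by omega, by omega, by simp⟩

lemma CCWConvexPos.det2_pos_of_lt (hq : CCWConvexPos q) {i j k : ℕ} (hij : i < j) (hjk : j < k)
    (hk : k < m) : 0 < det2 (q j - q i) (q k - q i) := by
  have hval : ∀ n < m, ((n : Fin m) : ℕ) = n := fun n hn => by
    rw [Fin.val_natCast, Nat.mod_eq_of_lt hn]
  exact hq _ _ _ (by rw [Fin.lt_def, hval i (by omega), hval j (by omega)]; exact hij)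
    (by rw [Fin.lt_def, hval j (by omega), hval k hk]; exact hjk)

lemma CCWConvexPos.det2_pos (hq : CCWConvexPos q) {i j k : ℕ} (hij : i < j) (hjk : j < k)
    (hki : k < i + m) : 0 < det2 (q j - q i) (q k - q i) := by
  have hshift : ∀ n t : ℕ, ((n + m * t : ℕ) : Fin m) = n := by simp
  wlog hi : i < m generalizing i j k
  · obtain ⟨t, ht⟩ : ∃ t, i % m + m * t = i := ⟨i / m, Nat.mod_add_div i m⟩
    have := this (i := i % m) (j := j - m * t) (k := k - m * t) (by omega) (by omega) (by omega)
      (Nat.mod_lt _ (NeZero.pos m))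
    rwa [← hshift (i % m) t, ← hshift (j - m * t) t, ← hshift (k - m * t) t, ht,
      Nat.sub_add_cancel (by omega), Nat.sub_add_cancel (by omega)] at this
  rcases lt_or_ge k m with hk | hk
  · exact hq.det2_pos_of_lt hij hjk hk
  have hk' := hshift (k - m) 1
  rw [mul_one, Nat.sub_add_cancel hk] at hk'
  rcases lt_or_ge j m with hj | hj
  · rw [hk', det2_sub_sub_rotate, det2_sub_sub_rotate]
    exact hq.det2_pos_of_lt (by omega) hij hj
  · have hj' := hshift (j - m) 1
    rw [mul_one, Nat.sub_add_cancel hj] at hj'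
    rw [hk', hj', det2_sub_sub_rotate]
    exact hq.det2_pos_of_lt (by omega) (by omega) hi

lemma CCWConvexPos.det2_nonneg_of_mem_convexHull (hq : CCWConvexPos q) (i : ℕ) {x : Pt}
    (hx : x ∈ convexHull ℝ (range q)) : 0 ≤ det2 (q (i + 1 : ℕ) - q i) (x - q i) := by
  refine convexHull_min ?_ (convex_setOf_det2_nonneg _ _) hx
  rintro _ ⟨j, rfl⟩
  obtain ⟨l, hil, hli, rfl⟩ := Fin.exists_le_lt_add_natCast_eq i j
  show 0 ≤ det2 _ _
  rcases (show l = i ∨ l = i + 1 ∨ i + 1 < l by omega) with rfl | rfl | hl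
  · simp [det2]
  · exact le_of_eq (by simp only [det2]; ring)
  · exact (hq.det2_pos (lt_add_one i) hl hli).le

lemma CCWConvexPos.natCast_notMem_interior (hq : CCWConvexPos q) (hm : 3 ≤ m) (i : ℕ) :
    q i ∉ interior (convexHull ℝ (range q)) := fun hi =>
  (hq.det2_pos (lt_add_one i) (lt_add_one (i + 1)) (by omega)).ne'
    (det2_eq_zero_of_mem_interior hi (fun _ hx => hq.det2_nonneg_of_mem_convexHull i hx) _)

lemma CCWConvexPos.exists_mem_convexHull_fan_triangle (hq : CCWConvexPos q) (hm : 3 ≤ m) (a : ℕ)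
    {x : Pt} (hx : x ∈ convexHull ℝ (range q)) :
    ∃ i, a < i ∧ i + 1 < a + m ∧ x ∈ convexHull ℝ {q a, q i, q (i + 1 : ℕ)} := by
  -- `f l` is the side of the ray from `q a` through `q l` on which `x` lies.
  set f : ℕ → ℝ := fun l => det2 (q l - q a) (x - q a)
  have hlast : f (a + 1 + (m - 3) + 1) ≤ 0 := by
    have h := hq.det2_nonneg_of_mem_convexHull (a + m - 1) hx
    rw [show a + m - 1 + 1 = a + m by omega, Nat.cast_add a m, Fin.natCast_self, add_zero,
      det2_sub_sub_swap] at h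
    rw [show a + 1 + (m - 3) + 1 = a + m - 1 by omega]
    linarith
  obtain ⟨i, hai, him, hfi, hfi'⟩ :=
    exists_nonneg_and_succ_nonpos f (hq.det2_nonneg_of_mem_convexHull a hx) (m - 3) hlast
  refine ⟨i, by omega, by omega, mem_convexHull_triangle_of_det2_nonneg
    (hq.det2_pos (by omega) (lt_add_one i) (by omega))
    (hq.det2_nonneg_of_mem_convexHull i hx) ?_ hfi⟩
  rw [det2_sub_sub_swap]
  linarith

end Polygon

section InnerProductSpace

variable {E : Type*} [NormedAddCommGroup E] [InnerProductSpace ℝ E]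

lemma convex_insert_setOf_inner_sub_pos (w v : E) :
    Convex ℝ (insert w {y : E | 0 < ⟪y - w, v⟫}) := by
  refine convex_iff_pairwise_pos.2 fun x hx y hy hxy a b ha hb hab => Or.inr ?_
  have hcombo : ⟪a • x + b • y - w, v⟫ = a * ⟪x - w, v⟫ + b * ⟪y - w, v⟫ := by
    rw [← real_inner_smul_left, ← real_inner_smul_left, ← inner_add_left, smul_sub, smul_sub]
    congr 1
    conv_lhs => rw [← one_smul ℝ w, ← hab, add_smul]
    abel
  rw [mem_ofPred_eq, hcombo]
  rcases hx with rfl | hx <;> rcases hy with rfl | hy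
  · exact absurd rfl hxy
  · simp only [sub_self, inner_zero_left, mul_zero, zero_add]; exact mul_pos hb hy
  · simp only [sub_self, inner_zero_left, mul_zero, add_zero]; exact mul_pos ha hx
  · exact add_pos (mul_pos ha hx) (mul_pos hb hy)

lemma eq_of_mem_convexHull_of_inner_sub_nonpos {s : Set E} {w v x : E}
    (hs : ∀ y ∈ s, y ≠ w → 0 < ⟪y - w, v⟫) (hx : x ∈ convexHull ℝ s) (hxw : ⟪x - w, v⟫ ≤ 0) :
    x = w := by
  have hsub : s ⊆ insert w {y | 0 < ⟪y - w, v⟫} := fun y hy => or_iff_not_imp_left.2 (hs y hy)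
  rcases convexHull_min hsub (convex_insert_setOf_inner_sub_pos w v) hx with h | h
  · exact h
  · exact absurd hxw (not_le.2 h)

end InnerProductSpace

lemma mem_diskD_iff {a b w : Pt} : w ∈ diskD a b ↔ ⟪a - w, b - w⟫ ≤ 0 := by
  have key : ⟪a - w, b - w⟫ = ‖w - midpoint ℝ a b‖ ^ 2 - (dist a b / 2) ^ 2 := by
    rw [dist_eq_norm, midpoint_eq_smul_add, div_pow, ← real_inner_self_eq_norm_sq,
      ← real_inner_self_eq_norm_sq]
    simp only [inner_sub_left, inner_sub_right, inner_add_left, inner_add_right,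
      real_inner_smul_left, real_inner_smul_right, real_inner_comm a b, real_inner_comm a w,
      real_inner_comm b w]
    norm_num
    ring
  rw [diskD, Metric.mem_closedBall, dist_eq_norm, key, sub_nonpos,
    sq_le_sq₀ (norm_nonneg _) (by positivity)]

section Drawing

variable {κ : Type*} {P W : Set Pt} {c : Pt → κ}

lemma notMem_convexHull_of_forall_color_eq_imp_eq
    (hdraw : ∀ a ∈ P, ∀ b ∈ P, a ≠ b → (gabrielEdge W a b ↔ c a ≠ c b))
    {p h : Pt} (hp : p ∈ P) (hh : h ∈ P) (hph : p ≠ h) (hc : c p = c h) {M : Set Pt}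
    (hMP : M ⊆ P) (hM : ∀ y ∈ M, c y = c h → y = h) : p ∉ convexHull ℝ M := by
  intro hpM
  obtain ⟨w, ⟨hwD, hwph⟩, hwW⟩ : ((diskD p h \ {p, h}) ∩ W).Nonempty :=
    nonempty_iff_ne_empty.2 fun he => (hdraw p hp h hh hph).1 he hc
  simp only [mem_insert_iff, mem_singleton_iff, not_or] at hwph
  refine hwph.1 (eq_of_mem_convexHull_of_inner_sub_nonpos (v := h - w) (fun y hy hyw => ?_)
    hpM (mem_diskD_iff.1 hwD)).symm
  by_cases hyh : y = h
  · subst hyh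
    rw [real_inner_self_eq_norm_sq]
    exact pow_pos (norm_pos_iff.2 (sub_ne_zero.2 hyw)) 2
  · have hedge := (hdraw y (hMP hy) h hh hyh).2 fun hyc => hyh (hM y hy hyc)
    by_contra hle
    have hw : w ∈ (diskD y h \ {y, h}) ∩ W :=
      ⟨⟨mem_diskD_iff.2 (not_lt.1 hle), by simp [Ne.symm hyw, hwph.2]⟩, hwW⟩
    rw [gabrielEdge] at hedge
    rwa [hedge] at hw

lemma notMem_convexHull_of_subsingleton_color
    (hdraw : ∀ a ∈ P, ∀ b ∈ P, a ≠ b → (gabrielEdge W a b ↔ c a ≠ c b))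
    {p h : Pt} (hp : p ∈ P) (hh : h ∈ P) (hph : p ≠ h) (hc : c p = c h) {M : Set Pt}
    (hMP : M ⊆ P) (hpM : p ∉ M) (hM : {y ∈ M | c y = c p}.Subsingleton) :
    p ∉ convexHull ℝ M := by
  by_cases hblack : ∃ y ∈ M, c y = c p
  · obtain ⟨y, hyM, hyc⟩ := hblack
    exact notMem_convexHull_of_forall_color_eq_imp_eq hdraw hp (hMP hyM)
      (fun hpy => hpM (hpy ▸ hyM)) hyc.symm hMP
      fun z hz hzc => hM ⟨hz, hzc.trans hyc⟩ ⟨hyM, hyc⟩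
  · simp only [not_exists, not_and] at hblack
    exact notMem_convexHull_of_forall_color_eq_imp_eq hdraw hp hh hph hc hMP
      fun z hz hzc => absurd (hzc.trans hc.symm) (hblack z hz)

end Drawing

/-- In a witness Gabriel drawing of a complete `k`-partite graph, the convex
hull of hull vertices with at least one black point and no two cyclically consecutive black
points contains no black point in its interior. -/
theorem no_black_point_inside_subset_hull
    {k : ℕ} (P W : Finset Pt) (c : Pt → Fin k)
    (hdraw : ∀ a ∈ P, ∀ b ∈ P, a ≠ b →
      (gabrielEdge (W : Set Pt) a b ↔ c a ≠ c b))
    (i₀ : Fin k) {m : ℕ} (hm : 3 ≤ m) (q : Fin m → Pt)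
    (hqP : ∀ j, q j ∈ P)
    (hconv : CCWConvexPos q)
    (hblack : ∃ j, c (q j) = i₀)
    (hnoconsec : ∀ j : Fin m, ¬ (c (q j) = i₀ ∧ c (q (cyclicSucc (by omega) j)) = i₀)) :
    ∀ p ∈ P, c p = i₀ → p ∉ interior (convexHull ℝ (Set.range q)) := by
  intro p hp hcp hpint
  have : NeZero m := ⟨by omega⟩
  have hvertex : ∀ l : ℕ, p ≠ q l := fun l hpl => hconv.natCast_notMem_interior hm l (hpl ▸ hpint)
  have hsucc : ∀ l : ℕ, c (q l) = i₀ → c (q (l + 1 : ℕ)) ≠ i₀ := fun l hl hl' =>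
    hnoconsec l ⟨hl, by rwa [cyclicSucc_natCast]⟩
  obtain ⟨j₀, hj₀⟩ := hblack
  have hapex : c (q ((j₀ : ℕ) + 1 : ℕ)) ≠ i₀ := hsucc j₀ (by rwa [Fin.cast_val_eq_self])
  obtain ⟨i, -, -, hpi⟩ :=
    hconv.exists_mem_convexHull_fan_triangle hm ((j₀ : ℕ) + 1) (interior_subset hpint)
  refine notMem_convexHull_of_subsingleton_color (P := P) hdraw hp (hqP j₀)
    (by simpa using hvertex j₀) (by rw [hcp, hj₀]) ?_ ?_ ?_ hpi
  · simp [insert_subset_iff, hqP]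
  · simp only [mem_insert_iff, mem_singleton_iff, not_or]
    exact ⟨hvertex _, hvertex _, hvertex _⟩
  · rintro y ⟨hy, hyc⟩ z ⟨hz, hzc⟩
    rw [hcp] at hyc hzc
    have hi := hsucc i
    simp only [mem_insert_iff, mem_singleton_iff] at hy hz
    rcases hy with rfl | rfl | rfl <;> rcases hz with rfl | rfl | rfl <;> tauto
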